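/- Let Φ be a normalized conjunction of MLS⊗ (a conjunction of atoms of the forms x = y ∪ z, x = y \ z, x ∈ y, x = y ⊗ z), let 𝔍 : V → 2^Σ be a map over a finite collection V of set variables containing Vars(Φ) such that Σ/𝔍 ⊨ Φ, where Σ is a transitive partition. If Σ' is a transitive partition which cart-imitates Σ via an injective map β : Σ → Σ', then the inherited assignment 𝔍̄ := β̄ ∘ 𝔍 satisfies Σ'/𝔍̄ ⊨ Φ. Moreover, if Σ' only weakly cart-imitates Σ, then Σ'/𝔍̄ ⊨ Φ⁻, the formula obtained from Φ by weakening each atom x = y ⊗ z to x ⊆ y ⊗ z. -/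

import Mathlib

open ZFSet

/-- A partition: a collection (as a ZFC set) of pairwise disjoint nonempty sets. -/
def IsPartition (S : ZFSet) : Prop :=
  (∀ σ ∈ S, σ ≠ (∅ : ZFSet)) ∧
    ∀ σ ∈ S, ∀ τ ∈ S, σ ≠ τ → σ ∩ τ = (∅ : ZFSet)

/-- A transitive partition: a partition whose domain `⋃₀ S` is a transitive set. -/
def IsTransPartition (S : ZFSet) : Prop :=
  IsPartition S ∧ (⋃₀ S : ZFSet).IsTransitive

/-- `P*(X)`: the set of nonempty subsets of `⋃₀ X` meeting every block of `X`. -/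
def powStar (X : ZFSet) : ZFSet :=
  ZFSet.sep (fun y => y ≠ (∅ : ZFSet) ∧ ∀ σ ∈ X, y ∩ σ ≠ (∅ : ZFSet))
    (ZFSet.powerset (⋃₀ X))

/-- `P*(X)_{1,2}`: the elements of `P*(X)` of cardinality 1 or 2. -/
def powStar12 (X : ZFSet) : ZFSet :=
  ZFSet.sep (fun y => ∃ a b : ZFSet, y = insert a ({b} : ZFSet)) (powStar X)

/-- Unordered Cartesian product `S ⊗ T = {{s,t} : s ∈ S, t ∈ T}`. -/
def otimes (S T : ZFSet) : ZFSet :=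
  ZFSet.sep (fun y => ∃ s ∈ S, ∃ t ∈ T, y = insert s ({t} : ZFSet))
    (ZFSet.powerset (S ∪ T))

/-- Image of a ZFC set under an arbitrary class function (classically definable). -/
noncomputable def zimg (f : ZFSet → ZFSet) (x : ZFSet) : ZFSet :=
  @ZFSet.image f (Classical.allZFSetDefinable _) x

/-- `Sh` weakly cart-imitates `Sg` via the bijection `β`. -/
def WCartImitates (Sh Sg : ZFSet) (β : ZFSet → ZFSet) : Prop :=
  -- `β` is a bijection from the blocks of `Sg` onto the blocks of `Sh`
  (∀ σ : ZFSet, σ ∈ Sg → β σ ∈ Sh) ∧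
  (∀ σ : ZFSet, σ ∈ Sg → ∀ τ : ZFSet, τ ∈ Sg → β σ = β τ → σ = τ) ∧
  (∀ τ : ZFSet, τ ∈ Sh → ∃ σ : ZFSet, σ ∈ Sg ∧ β σ = τ) ∧
  ∀ X : ZFSet, X ⊆ Sg → ∀ σ : ZFSet, σ ∈ Sg →
    -- (i)
    (powStar (zimg β X) ∩ β σ ≠ (∅ : ZFSet) → powStar X ∩ σ ≠ (∅ : ZFSet)) ∧
    -- (ii)
    ((⋃₀ zimg β X : ZFSet) ∈ β σ ↔ (⋃₀ X : ZFSet) ∈ σ) ∧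
    -- (iii)
    (powStar12 (zimg β X) ∩ β σ ≠ (∅ : ZFSet) ↔ powStar12 X ∩ σ ≠ (∅ : ZFSet)) ∧
    ((powStar (zimg β X) \ powStar12 (zimg β X)) ∩ β σ ≠ (∅ : ZFSet) ↔
      (powStar X \ powStar12 X) ∩ σ ≠ (∅ : ZFSet))

/-- `Sh` cart-imitates `Sg` via `β`: weak cart-imitation together with the
cart-saturated condition (iv). -/
def CartImitates (Sh Sg : ZFSet) (β : ZFSet → ZFSet) : Prop :=
  WCartImitates Sh Sg β ∧
    ∀ X : ZFSet, X ⊆ Sg → powStar12 X ⊆ (⋃₀ Sg : ZFSet) →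
      powStar12 (zimg β X) ⊆ (⋃₀ zimg β Sg : ZFSet)

/-- Atoms of a normalized conjunction of MLS⊗:
`x = y ∪ z`, `x = y \ z`, `x ∈ y`, `x = y ⊗ z`. -/
inductive MLSAtom : Type
  | eqUnion (x y z : ℕ)
  | eqDiff (x y z : ℕ)
  | mem (x y : ℕ)
  | eqProd (x y z : ℕ)

/-- The variables occurring in an atom. -/
def MLSAtom.vars : MLSAtom → Finset ℕ
  | eqUnion x y z => {x, y, z}
  | eqDiff x y z => {x, y, z}
  | mem x y => {x, y}
  | eqProd x y z => {x, y, z}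

/-- Satisfaction of an atom by a set assignment. -/
def SatAtom (M : ℕ → ZFSet) : MLSAtom → Prop
  | .eqUnion x y z => M x = M y ∪ M z
  | .eqDiff x y z => M x = M y \ M z
  | .mem x y => M x ∈ M y
  | .eqProd x y z => M x = otimes (M y) (M z)

/-- Satisfaction of the weakened atom, where `x = y ⊗ z` is weakened to
`x ⊆ y ⊗ z` (this gives the formula `Φ⁻`). -/
def SatAtomWeak (M : ℕ → ZFSet) : MLSAtom → Prop
  | .eqUnion x y z => M x = M y ∪ M z
  | .eqDiff x y z => M x = M y \ M z
  | .mem x y => M x ∈ M y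
  | .eqProd x y z => M x ⊆ otimes (M y) (M z)

/-!
Blocks of a partition are nonempty and pairwise disjoint, so `X ↦ ⋃₀ X` is injective on
subcollections of `Σ` and commutes with `∪` and `\`; hence the Boolean atoms transfer along
`β`, and membership atoms transfer by (ii).

For `x = y ⊗ z` the key identity is `P*({π₁, π₂})_{1,2} = π₁ ⊗ π₂`. Let `w ∈ β σ` with
`σ ∈ 𝔍(x)`. By transitivity of `Σ'`, `w ∈ P*(β[X])` where `X` collects the blocks whose images
meet `w`; by (iii) some `u ∈ σ` lies in `P*(X)` with the same cardinality type, and since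
`u ∈ M x = M y ⊗ M z` it is a pair `{s, t}` with `s ∈ π₁ ∈ 𝔍(y)`, `t ∈ π₂ ∈ 𝔍(z)`. As `P*` of
distinct subpartitions are disjoint, `X = {π₁, π₂}`, so `w ∈ β π₁ ⊗ β π₂`. Conversely, (iv)
places each element of `β π₁ ⊗ β π₂` in some block `β σ`, and (iii) then forces `σ ∈ 𝔍(x)`.
-/

namespace ZFSet

lemma ne_empty_iff_exists_mem {x : ZFSet} : x ≠ ∅ ↔ ∃ y, y ∈ x := by
  simp [eq_empty]

lemma inter_ne_empty_of_mem {x y z : ZFSet} (hx : z ∈ x) (hy : z ∈ y) : x ∩ y ≠ ∅ :=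
  ne_empty_iff_exists_mem.2 ⟨z, mem_inter.2 ⟨hx, hy⟩⟩

lemma insert_singleton_comm (a b : ZFSet) : ({a, b} : ZFSet) = {b, a} := by
  ext; simp [or_comm]

lemma pair_subset_iff {a b S : ZFSet} : ({a, b} : ZFSet) ⊆ S ↔ a ∈ S ∧ b ∈ S := by
  simp [subset_def]

lemma pair_inter_ne_empty_iff {a b π : ZFSet} :
    ({a, b} : ZFSet) ∩ π ≠ ∅ ↔ a ∈ π ∨ b ∈ π := by
  simp [ne_empty_iff_exists_mem]

lemma exists_pair_eq_of_meets {a b π₁ π₂ : ZFSet} (ha : a ∈ π₁ ∨ a ∈ π₂)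
    (hb : b ∈ π₁ ∨ b ∈ π₂) (h₁ : a ∈ π₁ ∨ b ∈ π₁) (h₂ : a ∈ π₂ ∨ b ∈ π₂) :
    ∃ s ∈ π₁, ∃ t ∈ π₂, ({a, b} : ZFSet) = {s, t} := by
  rcases ha with ha | ha <;> rcases hb with hb | hb
  · rcases h₂ with h | h
    exacts [⟨b, hb, a, h, insert_singleton_comm a b⟩, ⟨a, ha, b, h, rfl⟩]
  · exact ⟨a, ha, b, hb, rfl⟩
  · exact ⟨b, hb, a, ha, insert_singleton_comm a b⟩
  · rcases h₁ with h | h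
    exacts [⟨a, h, b, hb, rfl⟩, ⟨b, h, a, ha, insert_singleton_comm a b⟩]

lemma sUnion_union (x y : ZFSet) : ⋃₀ (x ∪ y) = ⋃₀ x ∪ ⋃₀ y := by
  ext; simp [or_and_right, exists_or]

lemma subset_sUnion_of_mem {x y : ZFSet} (h : x ∈ y) : x ⊆ ⋃₀ y :=
  fun _ hz => mem_sUnion_of_mem hz h

lemma sUnion_subset_sUnion {x y : ZFSet} (h : x ⊆ y) : ⋃₀ x ⊆ ⋃₀ y := fun _ hz =>
  let ⟨_, hσ, hzσ⟩ := mem_sUnion.1 hz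
  mem_sUnion_of_mem hzσ (h hσ)

end ZFSet

section zimg

variable {f : ZFSet → ZFSet}

lemma mem_zimg {x y : ZFSet} : y ∈ zimg f x ↔ ∃ z ∈ x, f z = y :=
  @ZFSet.mem_image f (Classical.allZFSetDefinable _) x y

lemma mem_zimg_of_mem {x σ : ZFSet} (h : σ ∈ x) : f σ ∈ zimg f x :=
  mem_zimg.2 ⟨σ, h, rfl⟩

lemma mem_sUnion_zimg {x y : ZFSet} : y ∈ ⋃₀ zimg f x ↔ ∃ σ ∈ x, y ∈ f σ := by
  simp [mem_zimg]

lemma zimg_empty : zimg f ∅ = ∅ := by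
  ext; simp [mem_zimg]

lemma zimg_union (x y : ZFSet) : zimg f (x ∪ y) = zimg f x ∪ zimg f y := by
  ext; simp [mem_zimg, or_and_right, exists_or]

lemma zimg_pair (a b : ZFSet) : zimg f {a, b} = {f a, f b} := by
  ext; simp [mem_zimg, eq_comm]

lemma zimg_sdiff {S x y : ZFSet} (hf : Set.InjOn f S) (hx : x ⊆ S) (hy : y ⊆ S) :
    zimg f (x \ y) = zimg f x \ zimg f y := by
  ext z
  simp only [mem_zimg, mem_sdiff]
  constructor
  · rintro ⟨σ, ⟨hσx, hσy⟩, rfl⟩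
    exact ⟨⟨σ, hσx, rfl⟩, fun ⟨τ, hτy, hτσ⟩ => hσy (hf (hy hτy) (hx hσx) hτσ ▸ hτy)⟩
  · rintro ⟨⟨σ, hσx, rfl⟩, hσy⟩
    exact ⟨σ, ⟨hσx, fun h => hσy ⟨σ, h, rfl⟩⟩, rfl⟩

lemma zimg_subset {S T x : ZFSet} (hf : Set.MapsTo f S T) (hx : x ⊆ S) : zimg f x ⊆ T := by
  intro τ hτ
  obtain ⟨σ, hσ, rfl⟩ := mem_zimg.1 hτ
  exact hf (hx hσ)

end zimg

lemma mem_powStar {X u : ZFSet} :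
    u ∈ powStar X ↔ u ⊆ ⋃₀ X ∧ u ≠ ∅ ∧ ∀ σ ∈ X, u ∩ σ ≠ ∅ := by
  simp only [powStar, mem_sep, mem_powerset]

lemma mem_powStar12 {X u : ZFSet} :
    u ∈ powStar12 X ↔ u ∈ powStar X ∧ ∃ a b : ZFSet, u = {a, b} :=
  mem_sep

lemma mem_otimes {S T u : ZFSet} : u ∈ otimes S T ↔ ∃ s ∈ S, ∃ t ∈ T, u = {s, t} := by
  refine ⟨fun h => (mem_sep.1 h).2, ?_⟩
  rintro ⟨s, hs, t, ht, rfl⟩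
  have hst : ({s, t} : ZFSet) ⊆ S ∪ T :=
    pair_subset_iff.2 ⟨mem_union.2 (.inl hs), mem_union.2 (.inr ht)⟩
  exact mem_sep.2 ⟨mem_powerset.2 hst, s, hs, t, ht, rfl⟩

lemma empty_notMem_otimes (S T : ZFSet) : ∅ ∉ otimes S T := by
  rw [mem_otimes]
  rintro ⟨s, -, t, -, h⟩
  exact notMem_empty s (h ▸ mem_insert s _)

lemma mem_otimes_sUnion {B C u : ZFSet} :
    u ∈ otimes (⋃₀ B) (⋃₀ C) ↔ ∃ π₁ ∈ B, ∃ π₂ ∈ C, u ∈ otimes π₁ π₂ := by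
  simp only [mem_otimes, mem_sUnion]
  constructor
  · rintro ⟨s, ⟨π₁, hπ₁, hs⟩, t, ⟨π₂, hπ₂, ht⟩, rfl⟩
    exact ⟨π₁, hπ₁, π₂, hπ₂, s, hs, t, ht, rfl⟩
  · rintro ⟨π₁, hπ₁, π₂, hπ₂, s, hs, t, ht, rfl⟩
    exact ⟨s, ⟨π₁, hπ₁, hs⟩, t, ⟨π₂, hπ₂, ht⟩, rfl⟩

lemma powStar12_pair (π₁ π₂ : ZFSet) : powStar12 {π₁, π₂} = otimes π₁ π₂ := by
  ext u
  rw [mem_powStar12, mem_otimes]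
  constructor
  · rintro ⟨hu, a, b, rfl⟩
    simp only [mem_powStar, sUnion_pair, pair_subset_iff, mem_union, pair_inter_ne_empty_iff,
      mem_pair, forall_eq_or_imp, forall_eq] at hu
    exact exists_pair_eq_of_meets hu.1.1 hu.1.2 hu.2.2.1 hu.2.2.2
  · rintro ⟨s, hs, t, ht, rfl⟩
    simp only [mem_powStar, sUnion_pair, pair_subset_iff, mem_union, pair_inter_ne_empty_iff,
      mem_pair, forall_eq_or_imp, forall_eq]
    exact ⟨⟨⟨.inl hs, .inr ht⟩, ne_empty_iff_exists_mem.2 ⟨s, mem_insert s _⟩, .inl hs, .inr ht⟩,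
      s, t, rfl⟩

namespace IsPartition

variable {S : ZFSet}

lemma eq_of_mem_of_mem (hS : IsPartition S) {σ τ z : ZFSet} (hσ : σ ∈ S) (hτ : τ ∈ S)
    (hzσ : z ∈ σ) (hzτ : z ∈ τ) : σ = τ := by
  by_contra hne
  exact inter_ne_empty_of_mem hzσ hzτ (hS.2 σ hσ τ hτ hne)

lemma subset_of_sUnion_subset (hS : IsPartition S) {A B : ZFSet} (hA : A ⊆ S) (hB : B ⊆ S)
    (h : ⋃₀ A ⊆ ⋃₀ B) : A ⊆ B := by
  intro σ hσ
  obtain ⟨z, hz⟩ := ne_empty_iff_exists_mem.1 (hS.1 σ (hA hσ))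
  obtain ⟨τ, hτ, hzτ⟩ := mem_sUnion.1 (h (mem_sUnion_of_mem hz hσ))
  rwa [hS.eq_of_mem_of_mem (hA hσ) (hB hτ) hz hzτ]

lemma eq_of_sUnion_eq (hS : IsPartition S) {A B : ZFSet} (hA : A ⊆ S) (hB : B ⊆ S)
    (h : ⋃₀ A = ⋃₀ B) : A = B :=
  subset_antisymm (hS.subset_of_sUnion_subset hA hB h.le) (hS.subset_of_sUnion_subset hB hA h.ge)

lemma sUnion_sdiff (hS : IsPartition S) {A B : ZFSet} (hA : A ⊆ S) (hB : B ⊆ S) :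
    ⋃₀ (A \ B) = ⋃₀ A \ ⋃₀ B := by
  ext z
  simp only [mem_sUnion, mem_sdiff]
  constructor
  · rintro ⟨σ, ⟨hσA, hσB⟩, hzσ⟩
    exact ⟨⟨σ, hσA, hzσ⟩, fun ⟨τ, hτB, hzτ⟩ =>
      hσB (hS.eq_of_mem_of_mem (hA hσA) (hB hτB) hzσ hzτ ▸ hτB)⟩
  · rintro ⟨⟨σ, hσA, hzσ⟩, hz⟩
    exact ⟨σ, ⟨hσA, fun hσB => hz ⟨σ, hσB, hzσ⟩⟩, hzσ⟩

lemma subset_of_mem_powStar (hS : IsPartition S) {X Y u : ZFSet} (hX : X ⊆ S) (hY : Y ⊆ S)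
    (hu : u ∈ powStar X) (huY : u ⊆ ⋃₀ Y) : X ⊆ Y := by
  intro σ hσ
  obtain ⟨z, hz⟩ := ne_empty_iff_exists_mem.1 ((mem_powStar.1 hu).2.2 σ hσ)
  rw [mem_inter] at hz
  obtain ⟨τ, hτ, hzτ⟩ := mem_sUnion.1 (huY hz.1)
  rwa [hS.eq_of_mem_of_mem (hX hσ) (hY hτ) hz.2 hzτ]

lemma eq_of_mem_powStar (hS : IsPartition S) {X Y u : ZFSet} (hX : X ⊆ S) (hY : Y ⊆ S)
    (huX : u ∈ powStar X) (huY : u ∈ powStar Y) : X = Y :=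
  subset_antisymm (hS.subset_of_mem_powStar hX hY huX (mem_powStar.1 huY).1)
    (hS.subset_of_mem_powStar hY hX huY (mem_powStar.1 huX).1)

end IsPartition

namespace WCartImitates

variable {Sh Sg : ZFSet} {β : ZFSet → ZFSet}

lemma mapsTo (h : WCartImitates Sh Sg β) : Set.MapsTo β Sg Sh := h.1

lemma injOn (h : WCartImitates Sh Sg β) : Set.InjOn β Sg := h.2.1

lemma surjOn (h : WCartImitates Sh Sg β) : Set.SurjOn β Sg Sh := h.2.2.1

lemma sUnion_zimg_mem_iff (h : WCartImitates Sh Sg β) {X σ : ZFSet} (hX : X ⊆ Sg)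
    (hσ : σ ∈ Sg) : ⋃₀ zimg β X ∈ β σ ↔ ⋃₀ X ∈ σ :=
  (h.2.2.2 X hX σ hσ).2.1

lemma powStar12_inter_ne_empty_iff (h : WCartImitates Sh Sg β) {X σ : ZFSet} (hX : X ⊆ Sg)
    (hσ : σ ∈ Sg) : powStar12 (zimg β X) ∩ β σ ≠ ∅ ↔ powStar12 X ∩ σ ≠ ∅ :=
  (h.2.2.2 X hX σ hσ).2.2.1

lemma powStar_sdiff_inter_ne_empty_iff (h : WCartImitates Sh Sg β) {X σ : ZFSet}
    (hX : X ⊆ Sg) (hσ : σ ∈ Sg) :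
    (powStar (zimg β X) \ powStar12 (zimg β X)) ∩ β σ ≠ ∅ ↔
      (powStar X \ powStar12 X) ∩ σ ≠ ∅ :=
  (h.2.2.2 X hX σ hσ).2.2.2

lemma empty_notMem (h : WCartImitates Sh Sg β) {σ : ZFSet} (hσ : σ ∈ Sg) (he : ∅ ∉ σ) :
    ∅ ∉ β σ := by
  have := h.sUnion_zimg_mem_iff (empty_subset Sg) hσ
  rwa [zimg_empty, sUnion_empty, Iff.comm, iff_false_left he] at this

end WCartImitates

section Transfer

variable {Sg Sh A B C : ZFSet} {β : ZFSet → ZFSet}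

lemma IsPartition.sUnion_zimg_eq_union (hSg : IsPartition Sg) (hA : A ⊆ Sg) (hB : B ⊆ Sg)
    (hC : C ⊆ Sg) (h : ⋃₀ A = ⋃₀ B ∪ ⋃₀ C) :
    ⋃₀ zimg β A = ⋃₀ zimg β B ∪ ⋃₀ zimg β C := by
  have hBC : B ∪ C ⊆ Sg := fun σ hσ => (mem_union.1 hσ).elim (@hB σ) (@hC σ)
  rw [hSg.eq_of_sUnion_eq hA hBC (h.trans (sUnion_union B C).symm), zimg_union, sUnion_union]

lemma IsPartition.sUnion_zimg_eq_sdiff (hSg : IsPartition Sg) (hSh : IsPartition Sh)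
    (hmaps : Set.MapsTo β Sg Sh) (hinj : Set.InjOn β Sg) (hA : A ⊆ Sg) (hB : B ⊆ Sg)
    (hC : C ⊆ Sg) (h : ⋃₀ A = ⋃₀ B \ ⋃₀ C) :
    ⋃₀ zimg β A = ⋃₀ zimg β B \ ⋃₀ zimg β C := by
  have hBC : B \ C ⊆ Sg := fun σ hσ => hB (mem_sdiff.1 hσ).1
  rw [hSg.eq_of_sUnion_eq hA hBC (h.trans (hSg.sUnion_sdiff hB hC).symm), zimg_sdiff hinj hB hC,
    hSh.sUnion_sdiff (zimg_subset hmaps hB) (zimg_subset hmaps hC)]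

lemma WCartImitates.sUnion_zimg_mem (h : WCartImitates Sh Sg β) (hA : A ⊆ Sg) (hB : B ⊆ Sg)
    (hAB : ⋃₀ A ∈ ⋃₀ B) : ⋃₀ zimg β A ∈ ⋃₀ zimg β B := by
  obtain ⟨σ, hσ, hAσ⟩ := mem_sUnion.1 hAB
  exact mem_sUnion_zimg.2 ⟨σ, hσ, (h.sUnion_zimg_mem_iff hA (hB hσ)).2 hAσ⟩

lemma mem_powStar_zimg_sep (hSh : (⋃₀ Sh).IsTransitive)
    (hsurj : Set.SurjOn β Sg Sh) {w τ : ZFSet} (hτ : τ ∈ Sh) (hwτ : w ∈ τ)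
    (hw : w ≠ ∅) : w ∈ powStar (zimg β (Sg.sep fun σ => w ∩ β σ ≠ ∅)) := by
  refine mem_powStar.2 ⟨fun z hz => ?_, hw, fun τ' hτ' => ?_⟩
  · obtain ⟨τ', hτ', hzτ'⟩ := mem_sUnion.1 (hSh.subset_of_mem (mem_sUnion_of_mem hwτ hτ) hz)
    obtain ⟨σ, hσ, rfl⟩ := hsurj hτ'
    exact mem_sUnion_zimg.2 ⟨σ, mem_sep.2 ⟨hσ, inter_ne_empty_of_mem hz hzτ'⟩, hzτ'⟩
  · obtain ⟨σ, hσ, rfl⟩ := mem_zimg.1 hτ'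
    exact (mem_sep.1 hσ).2

lemma WCartImitates.sUnion_zimg_subset_otimes (h : WCartImitates Sh Sg β)
    (hSg : IsPartition Sg) (hSh : (⋃₀ Sh).IsTransitive) (hA : A ⊆ Sg) (hB : B ⊆ Sg)
    (hC : C ⊆ Sg) (hABC : ⋃₀ A = otimes (⋃₀ B) (⋃₀ C)) :
    ⋃₀ zimg β A ⊆ otimes (⋃₀ zimg β B) (⋃₀ zimg β C) := by
  intro w hw
  obtain ⟨σ, hσA, hwσ⟩ := mem_sUnion_zimg.1 hw
  have hσ : σ ⊆ otimes (⋃₀ B) (⋃₀ C) := hABC ▸ subset_sUnion_of_mem hσA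
  have hw₀ : w ≠ ∅ := by
    rintro rfl
    exact h.empty_notMem (hA hσA) (fun he => empty_notMem_otimes _ _ (hσ he)) hwσ
  set X := Sg.sep fun σ => w ∩ β σ ≠ ∅
  have hX : X ⊆ Sg := sep_subset
  have hwX := mem_powStar_zimg_sep hSh h.surjOn (h.mapsTo (hA hσA)) hwσ hw₀
  -- the elements of `σ` are pairs, so (iii) excludes `w ∉ P*(β[X])_{1,2}`
  have hw12 : w ∈ powStar12 (zimg β X) := by
    by_contra hw12
    obtain ⟨u, hu⟩ := ne_empty_iff_exists_mem.1 <|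
      (h.powStar_sdiff_inter_ne_empty_iff hX (hA hσA)).1 <|
        inter_ne_empty_of_mem (mem_sdiff.2 ⟨hwX, hw12⟩) hwσ
    obtain ⟨⟨huX, hu12⟩, huσ⟩ := by simpa only [mem_inter, mem_sdiff] using hu
    obtain ⟨s, -, t, -, rfl⟩ := mem_otimes.1 (hσ huσ)
    exact hu12 (mem_powStar12.2 ⟨huX, s, t, rfl⟩)
  obtain ⟨u, hu⟩ := ne_empty_iff_exists_mem.1 <|
    (h.powStar12_inter_ne_empty_iff hX (hA hσA)).1 (inter_ne_empty_of_mem hw12 hwσ)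
  rw [mem_inter] at hu
  obtain ⟨π₁, hπ₁, π₂, hπ₂, huπ⟩ := mem_otimes_sUnion.1 (hσ hu.2)
  have hXπ : X = {π₁, π₂} := by
    refine hSg.eq_of_mem_powStar hX (pair_subset_iff.2 ⟨hB hπ₁, hC hπ₂⟩)
      (mem_powStar12.1 hu.1).1 (mem_powStar12.1 ?_).1
    rwa [powStar12_pair]
  rw [hXπ, zimg_pair, powStar12_pair] at hw12
  exact mem_otimes_sUnion.2 ⟨β π₁, mem_zimg_of_mem hπ₁, β π₂, mem_zimg_of_mem hπ₂, hw12⟩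

lemma CartImitates.otimes_subset_sUnion_zimg (h : CartImitates Sh Sg β) (hSg : IsPartition Sg)
    (hA : A ⊆ Sg) (hB : B ⊆ Sg) (hC : C ⊆ Sg) (hABC : ⋃₀ A = otimes (⋃₀ B) (⋃₀ C)) :
    otimes (⋃₀ zimg β B) (⋃₀ zimg β C) ⊆ ⋃₀ zimg β A := by
  intro w hw
  obtain ⟨τ₁, hτ₁, τ₂, hτ₂, hwτ⟩ := mem_otimes_sUnion.1 hw
  obtain ⟨π₁, hπ₁, rfl⟩ := mem_zimg.1 hτ₁
  obtain ⟨π₂, hπ₂, rfl⟩ := mem_zimg.1 hτ₂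
  have hX : {π₁, π₂} ⊆ Sg := pair_subset_iff.2 ⟨hB hπ₁, hC hπ₂⟩
  have hπA : otimes π₁ π₂ ⊆ ⋃₀ A := by
    rw [hABC]
    exact fun u hu => mem_otimes_sUnion.2 ⟨π₁, hπ₁, π₂, hπ₂, hu⟩
  have hw12 : w ∈ powStar12 (zimg β {π₁, π₂}) := by rwa [zimg_pair, powStar12_pair]
  have hsat : powStar12 {π₁, π₂} ⊆ ⋃₀ Sg := by
    rw [powStar12_pair]
    exact hπA.trans (sUnion_subset_sUnion hA)
  obtain ⟨σ, hσ, hwσ⟩ := mem_sUnion_zimg.1 (h.2 _ hX hsat hw12)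
  obtain ⟨u, hu⟩ := ne_empty_iff_exists_mem.1 <|
    (h.1.powStar12_inter_ne_empty_iff hX hσ).1 (inter_ne_empty_of_mem hw12 hwσ)
  rw [mem_inter, powStar12_pair] at hu
  obtain ⟨ρ, hρA, huρ⟩ := mem_sUnion.1 (hπA hu.1)
  rw [hSg.eq_of_mem_of_mem hσ (hA hρA) hu.2 huρ] at hwσ
  exact mem_sUnion_zimg.2 ⟨ρ, hρA, hwσ⟩

end Transfer

section Atoms

variable {Sg Sh : ZFSet} {β : ZFSet → ZFSet} {J : ℕ → ZFSet} {a : MLSAtom}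

lemma satAtomWeak_of_wCartImitates (hSg : IsPartition Sg) (hSh : IsTransPartition Sh)
    (h : WCartImitates Sh Sg β) (hJ : ∀ v ∈ a.vars, J v ⊆ Sg)
    (ha : SatAtom (fun v => ⋃₀ J v) a) : SatAtomWeak (fun v => ⋃₀ zimg β (J v)) a := by
  cases a <;>
    simp only [MLSAtom.vars, Finset.mem_insert, Finset.mem_singleton, forall_eq_or_imp,
      forall_eq] at hJ
  case eqUnion => exact hSg.sUnion_zimg_eq_union hJ.1 hJ.2.1 hJ.2.2 ha
  case eqDiff =>
    exact hSg.sUnion_zimg_eq_sdiff hSh.1 h.mapsTo h.injOn hJ.1 hJ.2.1 hJ.2.2 ha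
  case mem => exact h.sUnion_zimg_mem hJ.1 hJ.2 ha
  case eqProd => exact h.sUnion_zimg_subset_otimes hSg hSh.2 hJ.1 hJ.2.1 hJ.2.2 ha

lemma satAtom_of_cartImitates (hSg : IsPartition Sg) (hSh : IsTransPartition Sh)
    (h : CartImitates Sh Sg β) (hJ : ∀ v ∈ a.vars, J v ⊆ Sg)
    (ha : SatAtom (fun v => ⋃₀ J v) a) : SatAtom (fun v => ⋃₀ zimg β (J v)) a := by
  cases a with
  | eqProd x y z =>
    simp only [MLSAtom.vars, Finset.mem_insert, Finset.mem_singleton, forall_eq_or_imp,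
      forall_eq] at hJ
    exact subset_antisymm (h.1.sUnion_zimg_subset_otimes hSg hSh.2 hJ.1 hJ.2.1 hJ.2.2 ha)
      (h.otimes_subset_sUnion_zimg hSg hJ.1 hJ.2.1 hJ.2.2 ha)
  | _ => exact satAtomWeak_of_wCartImitates hSg hSh h.1 hJ ha

end Atoms

/-- if the transitive partition `Σ` satisfies a normalized conjunction
`Φ` of MLS⊗ via `𝔍`, and `Σ'` cart-imitates `Σ` via `β`, then `Σ'` satisfies `Φ` via
the inherited assignment `𝔍̄ = β̄ ∘ 𝔍`; if `Σ'` only weakly cart-imitates `Σ`, then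
`Σ'/𝔍̄` satisfies `Φ⁻`. -/
theorem cart_imitates_model
    (Sg Sg' : ZFSet) (hSg : IsTransPartition Sg) (hSg' : IsTransPartition Sg')
    (β : ZFSet → ZFSet)
    (V : Finset ℕ) (J : ℕ → ZFSet) (hJ : ∀ v ∈ V, J v ⊆ Sg)
    (Φ : List MLSAtom) (hvars : ∀ a ∈ Φ, MLSAtom.vars a ⊆ V)
    (hsat : ∀ a ∈ Φ, SatAtom (fun v => (⋃₀ J v : ZFSet)) a) :
    (CartImitates Sg' Sg β →
      ∀ a ∈ Φ, SatAtom (fun v => (⋃₀ zimg β (J v) : ZFSet)) a) ∧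
    (WCartImitates Sg' Sg β →
      ∀ a ∈ Φ, SatAtomWeak (fun v => (⋃₀ zimg β (J v) : ZFSet)) a) := by
  have hJΦ : ∀ a ∈ Φ, ∀ v ∈ a.vars, J v ⊆ Sg := fun a ha v hv => hJ v (hvars a ha hv)
  exact ⟨fun h a ha => satAtom_of_cartImitates hSg.1 hSg' h (hJΦ a ha) (hsat a ha),
    fun h a ha => satAtomWeak_of_wCartImitates hSg.1 hSg' h (hJΦ a ha) (hsat a ha)⟩
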